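/- Let (x, x₁) be a Mannheim D-pair of type 1 in Minkowski 3-space with g = n₁ at corresponding points and T₁ = cosh θ·T - sinh θ·n, g₁ = -sinh θ·T + cosh θ·n. Then differentiating ⟨g, g₁⟩ = 0 with respect to s₁ yields τ_{g₁} = (-k_g·sinh θ + τ_g·cosh θ)·(ds/ds₁). -/

import Mathlib

noncomputable section

open Real

/-- Minkowski inner product on ℝ³: ⟨u,v⟩ = -u₁v₁ + u₂v₂ + u₃v₃. -/
def mink (u v : Fin 3 → ℝ) : ℝ := -(u 0 * v 0) + u 1 * v 1 + u 2 * v 2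

/-- Lorentzian cross product on Minkowski 3-space. -/
def lcross (u v : Fin 3 → ℝ) : Fin 3 → ℝ :=
  ![u 1 * v 2 - u 2 * v 1, u 0 * v 2 - u 2 * v 0, u 1 * v 0 - u 0 * v 1]

/-! Since ⟨g, g₁⟩ is constant, the product rule makes
σ ⟨-k_g T + τ_g n, g₁⟩ + ⟨n₁, k_{g₁} T₁ + τ_{g₁} n₁⟩ vanish. Pairing a combination of a
spacelike unit vector e and an orthogonal timelike unit vector f with e reads off the
e-coefficient, and with f minus the f-coefficient; so the two terms are
σ (k_g sinh θ - τ_g cosh θ) and τ_{g₁}. -/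

section MinkowskiForm

lemma mink_comm (u v : Fin 3 → ℝ) : mink u v = mink v u := by
  simp only [mink]; ring

lemma mink_smul_left (a : ℝ) (u w : Fin 3 → ℝ) : mink (a • u) w = a * mink u w := by
  simp only [mink, Pi.smul_apply, smul_eq_mul]; ring

lemma mink_smul_add_smul_left (a b : ℝ) (u v w : Fin 3 → ℝ) :
    mink (a • u + b • v) w = a * mink u w + b * mink v w := by
  simp only [mink, Pi.add_apply, Pi.smul_apply, smul_eq_mul]; ring

lemma mink_smul_add_smul_right (a b : ℝ) (u v w : Fin 3 → ℝ) :
    mink w (a • u + b • v) = a * mink w u + b * mink w v := by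
  rw [mink_comm, mink_smul_add_smul_left, mink_comm u, mink_comm v]

theorem HasDerivAt.mink {u v : ℝ → Fin 3 → ℝ} {u' v' : Fin 3 → ℝ} {s : ℝ}
    (hu : HasDerivAt u u' s) (hv : HasDerivAt v v' s) :
    HasDerivAt (fun t => _root_.mink (u t) (v t))
      (_root_.mink u' (v s) + _root_.mink (u s) v') s := by
  have hu := hasDerivAt_pi.mp hu
  have hv := hasDerivAt_pi.mp hv
  exact ((((hu 0).mul (hv 0)).neg.add ((hu 1).mul (hv 1))).add ((hu 2).mul (hv 2))).congr_deriv
    (by simp only [_root_.mink]; ring)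

theorem HasDerivAt.mink_deriv_eq_zero_of_const {u v : ℝ → Fin 3 → ℝ} {u' v' : Fin 3 → ℝ}
    {s c : ℝ} (hu : HasDerivAt u u' s) (hv : HasDerivAt v v' s)
    (hc : ∀ t, _root_.mink (u t) (v t) = c) :
    _root_.mink u' (v s) + _root_.mink (u s) v' = 0 := by
  refine (hu.mink hv).unique ?_
  simpa only [hc] using hasDerivAt_const s c

end MinkowskiForm

section Frame

variable {e f : Fin 3 → ℝ}

lemma mink_smul_add_smul_of_unit_spacelike (he : mink e e = 1) (hef : mink e f = 0) (a b : ℝ) :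
    mink e (a • e + b • f) = a := by
  rw [mink_smul_add_smul_right, he, hef]; ring

lemma mink_smul_add_smul_of_unit_timelike (hef : mink e f = 0) (hf : mink f f = -1) (a b : ℝ) :
    mink f (a • e + b • f) = -b := by
  rw [mink_smul_add_smul_right, mink_comm f e, hef, hf]; ring

end Frame

theorem mannheim_type1_tg1_relation_general
    (T T₁ g g₁ n n₁ : ℝ → Fin 3 → ℝ)
    (kg τg kg₁ τg₁ σ θ : ℝ → ℝ)
    (hg₁ : ∀ s, g₁ s = (-Real.sinh (θ s)) • T s + Real.cosh (θ s) • n s)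
    (hgn₁ : ∀ s, g s = n₁ s)
    (hgg₁ : ∀ s, mink (g s) (g₁ s) = 0)
    (hgd : ∀ s, HasDerivAt g (σ s • ((-(kg s)) • T s + τg s • n s)) s)
    (hg₁d : ∀ s, HasDerivAt g₁ (kg₁ s • T₁ s + τg₁ s • n₁ s) s)
    (h1 : ∀ s, mink (T s) (T s) = 1)
    (h3 : ∀ s, mink (n s) (n s) = -1)
    (h5 : ∀ s, mink (T s) (n s) = 0)
    (h9 : ∀ s, mink (n₁ s) (n₁ s) = 1)
    (h11 : ∀ s, mink (T₁ s) (n₁ s) = 0) :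
    ∀ s, τg₁ s = (-(kg s) * Real.sinh (θ s) + τg s * Real.cosh (θ s)) * σ s := by
  intro s
  have hderiv := (hgd s).mink_deriv_eq_zero_of_const (hg₁d s) hgg₁
  have hTg₁ : mink (T s) (g₁ s) = -sinh (θ s) := by
    rw [hg₁ s, mink_smul_add_smul_of_unit_spacelike (h1 s) (h5 s)]
  have hng₁ : mink (n s) (g₁ s) = -cosh (θ s) := by
    rw [hg₁ s, mink_smul_add_smul_of_unit_timelike (h5 s) (h3 s)]
  have hn₁g₁' : mink (g s) (kg₁ s • T₁ s + τg₁ s • n₁ s) = τg₁ s := by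
    rw [hgn₁ s, add_comm, mink_smul_add_smul_of_unit_spacelike (h9 s) (by rw [mink_comm, h11 s])]
  rw [mink_smul_left, mink_smul_add_smul_left, hTg₁, hng₁, hn₁g₁'] at hderiv
  linarith

/-- Theorem 4.3 (iv): differentiating ⟨g,g₁⟩ = 0 gives
τ_{g₁} = (-k_g·sinh θ + τ_g·cosh θ)·(ds/ds₁).  Everything is a function of s₁. -/
theorem mannheim_type1_tg1_relation
    (T T₁ g g₁ n n₁ : ℝ → Fin 3 → ℝ)
    (kg kn τg kg₁ kn₁ τg₁ σ θ : ℝ → ℝ)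
    (hT₁ : ∀ s, T₁ s = Real.cosh (θ s) • T s - Real.sinh (θ s) • n s)
    (hg₁ : ∀ s, g₁ s = (-Real.sinh (θ s)) • T s + Real.cosh (θ s) • n s)
    (hgn₁ : ∀ s, g s = n₁ s)
    (hgg₁ : ∀ s, mink (g s) (g₁ s) = 0)
    (hgd : ∀ s, HasDerivAt g (σ s • ((-(kg s)) • T s + τg s • n s)) s)
    (hg₁d : ∀ s, HasDerivAt g₁ (kg₁ s • T₁ s + τg₁ s • n₁ s) s)
    (h1 : ∀ s, mink (T s) (T s) = 1) (h2 : ∀ s, mink (g s) (g s) = 1)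
    (h3 : ∀ s, mink (n s) (n s) = -1)
    (h4 : ∀ s, mink (T s) (g s) = 0) (h5 : ∀ s, mink (T s) (n s) = 0)
    (h6 : ∀ s, mink (g s) (n s) = 0)
    (h7 : ∀ s, mink (T₁ s) (T₁ s) = 1) (h8 : ∀ s, mink (g₁ s) (g₁ s) = -1)
    (h9 : ∀ s, mink (n₁ s) (n₁ s) = 1)
    (h10 : ∀ s, mink (T₁ s) (g₁ s) = 0) (h11 : ∀ s, mink (T₁ s) (n₁ s) = 0)
    (h12 : ∀ s, mink (g₁ s) (n₁ s) = 0) :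
    ∀ s, τg₁ s = (-(kg s) * Real.sinh (θ s) + τg s * Real.cosh (θ s)) * σ s :=
  mannheim_type1_tg1_relation_general T T₁ g g₁ n n₁ kg τg kg₁ τg₁ σ θ hg₁ hgn₁ hgg₁ hgd hg₁d h1 h3
    h5 h9 h11
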